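/- arXiv:2104.11997 — 3 statements merged into one kernel-verified Lean document; each statement's English description precedes it below -/
import Mathlib

section
/- Let G be a finite p-group (p prime). The number of maximal abelian subgroups of G (i.e., subgroups maximal with respect to inclusion among abelian subgroups of G) is congruent to 1 modulo p. -/
/-!
Induct on `|G|`. A maximal abelian subgroup `A` is its own centralizer, so it contains the
centre `Z`, and if `G` is not abelian then `A / Z` is a nontrivial `p`-group. Count the pairs
`(c, A)` with `c ∈ A / Z ≤ G / Z`: summing over `A` gives `0 mod p`. Summing over `c`, the class
`c = 1` lies in all `N` of them, while for `c = gZ ≠ 1` they are the maximal abelian subgroups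
containing `g`, which are exactly the maximal abelian subgroups of the proper subgroup `C_G(g)`,
hence `≡ 1` by induction. So `0 ≡ N + (|G / Z| - 1) ≡ N - 1`.
-/

open Subgroup

namespace Subgroup

variable {G : Type*} [Group G]

abbrev IsMaximalCommutative (A : Subgroup G) : Prop :=
  Maximal (fun H : Subgroup G => IsMulCommutative H) A

theorem isMulCommutative_map_subtype_iff {H : Subgroup G} {B : Subgroup H} :
    IsMulCommutative (B.map H.subtype) ↔ IsMulCommutative B :=
  ⟨fun _ => comap_map_eq_self_of_injective H.subtype_injective B ▸
      comap_injective_isMulCommutative _ H.subtype_injective,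
    fun _ => inferInstance⟩

namespace IsMaximalCommutative

variable {A : Subgroup G}

theorem centralizer_le (hA : A.IsMaximalCommutative) : centralizer (A : Set G) ≤ A := by
  have := hA.1
  intro x hx
  have hcomm : IsMulCommutative (closure (insert x (A : Set G))) := by
    refine isMulCommutative_closure ?_
    rintro y (rfl | hy) z (rfl | hz)
    · rfl
    · exact (hx z hz).symm
    · exact hx y hy
    · exact setLike_mul_comm hy hz
  exact hA.2 hcomm (fun a ha => subset_closure (Set.mem_insert_of_mem x ha))
    (subset_closure (Set.mem_insert x _))

theorem center_le (hA : A.IsMaximalCommutative) : center G ≤ A :=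
  (center_le_centralizer _).trans hA.centralizer_le

theorem not_le_center (hA : A.IsMaximalCommutative) (hG : ¬IsMulCommutative G) :
    ¬A ≤ center G := by
  intro hAZ
  refine hG (center_eq_top_iff.1 (eq_top_iff.2 ?_))
  calc ⊤ = centralizer (A : Set G) := (centralizer_eq_top_iff_subset.2 hAZ).symm
    _ ≤ A := hA.centralizer_le
    _ ≤ center G := hAZ

end IsMaximalCommutative

theorem isMaximalCommutative_iff_eq_top [IsMulCommutative G] {A : Subgroup G} :
    A.IsMaximalCommutative ↔ A = ⊤ :=
  ⟨fun hA => top_le_iff.1 (hA.2 inferInstance le_top),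
    fun h => h ▸ ⟨inferInstance, fun _ _ _ => le_top⟩⟩

theorem card_isMaximalCommutative_of_isMulCommutative [IsMulCommutative G] :
    Nat.card {A : Subgroup G // A.IsMaximalCommutative} = 1 := by
  simp only [isMaximalCommutative_iff_eq_top]
  exact Nat.card_unique

theorem isMaximalCommutative_map_subtype_iff {H : Subgroup G} {B : Subgroup H}
    (hH : ∀ K : Subgroup G, IsMulCommutative K → B.map H.subtype ≤ K → K ≤ H) :
    (B.map H.subtype).IsMaximalCommutative ↔ B.IsMaximalCommutative := by
  refine ⟨fun hB => ⟨isMulCommutative_map_subtype_iff.1 hB.1, fun K hK hBK => ?_⟩,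
    fun hB => ⟨isMulCommutative_map_subtype_iff.2 hB.1, fun K hK hBK => ?_⟩⟩
  · rw [← map_subtype_le_map_subtype]
    exact hB.2 (isMulCommutative_map_subtype_iff.2 hK) (map_subtype_le_map_subtype.2 hBK)
  · obtain ⟨K, rfl⟩ : ∃ K' : Subgroup H, K'.map H.subtype = K :=
      ⟨_, map_subgroupOf_eq_of_le (hH K hK hBK)⟩
    rw [map_subtype_le_map_subtype] at hBK ⊢
    exact hB.2 (isMulCommutative_map_subtype_iff.1 hK) hBK

theorem isMaximalCommutative_map_centralizer_iff (g : G) (B : Subgroup (centralizer {g})) :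
    (B.map (centralizer {g}).subtype).IsMaximalCommutative ∧
        g ∈ B.map (centralizer {g}).subtype ↔
      B.IsMaximalCommutative := by
  have hH : g ∈ B.map (centralizer {g}).subtype →
      ∀ K : Subgroup G, IsMulCommutative K → B.map (centralizer {g}).subtype ≤ K →
        K ≤ centralizer {g} := fun hg K _ hBK =>
    (le_centralizer K).trans (centralizer_le (Set.singleton_subset_iff.2 (hBK hg)))
  refine ⟨fun ⟨hB, hg⟩ => (isMaximalCommutative_map_subtype_iff (hH hg)).1 hB, fun hB => ?_⟩
  have hg : g ∈ B.map (centralizer {g}).subtype :=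
    ⟨⟨g, mem_centralizer_singleton_iff.2 rfl⟩,
      hB.center_le (mem_center_iff.2 fun h => Subtype.ext (mem_centralizer_singleton_iff.1 h.2)),
      rfl⟩
  exact ⟨(isMaximalCommutative_map_subtype_iff (hH hg)).2 hB, hg⟩

def isMaximalCommutativeMemEquiv (g : G) :
    {A : Subgroup G // A.IsMaximalCommutative ∧ g ∈ A} ≃
      {B : Subgroup (centralizer {g}) // B.IsMaximalCommutative} :=
  (Equiv.subtypeSubtypeEquivSubtype fun {_} hA =>
    (le_centralizer_iff_isMulCommutative.2 hA.1.1).trans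
      (centralizer_le (Set.singleton_subset_iff.2 hA.2))).symm.trans
  (Equiv.subtypeEquiv (MapSubtype.orderIso (centralizer {g})).toEquiv
    fun B => (isMaximalCommutative_map_centralizer_iff g B).symm).symm

end Subgroup

theorem QuotientGroup.mk_mem_map_mk'_iff {G : Type*} [Group G] {N A : Subgroup G} [N.Normal]
    (hNA : N ≤ A) {g : G} : (g : G ⧸ N) ∈ A.map (mk' N) ↔ g ∈ A := by
  rw [← mk'_apply, ← mem_comap, comap_map_eq_self (by rwa [ker_mk'])]

theorem Fintype.sum_natCard_subtype_comm {α β : Type*} [Fintype α] [Fintype β]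
    (r : α → β → Prop) : ∑ a, Nat.card {b // r a b} = ∑ b, Nat.card {a // r a b} := by
  classical
  simp only [Nat.card_eq_fintype_card, Fintype.card_subtype, Finset.card_filter]
  exact Finset.sum_comm

theorem Fintype.sum_ite_eq_else_one {ι R : Type*} [Fintype ι] [DecidableEq ι]
    [AddCommGroupWithOne R] (a : ι) (x : R) :
    ∑ i, (if i = a then x else 1) = Fintype.card ι + (x - 1) := by
  have hsplit (i : ι) : (if i = a then x else 1) = 1 + if i = a then x - 1 else 0 := by
    split_ifs <;> abel
  simp only [hsplit, Finset.sum_add_distrib, Fintype.sum_ite_eq', Finset.sum_const,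
    Finset.card_univ, nsmul_one]

namespace IsPGroup

variable {p : ℕ} [Fact p.Prime] {G : Type*} [Group G] [Finite G]

theorem natCast_card_eq_zero (hG : IsPGroup p G) [Nontrivial G] : (Nat.card G : ZMod p) = 0 :=
  (ZMod.natCast_eq_zero_iff _ _).2 (hG.card_eq_or_dvd.resolve_left Finite.one_lt_card.ne')

theorem natCast_card_map_mk_center_eq_zero (hG : IsPGroup p G) (hc : ¬IsMulCommutative G)
    {A : Subgroup G} (hA : A.IsMaximalCommutative) :
    (Nat.card (A.map (QuotientGroup.mk' (center G))) : ZMod p) = 0 := by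
  have : Nontrivial (A.map (QuotientGroup.mk' (center G))) := by
    rw [nontrivial_iff_ne_bot, Ne, Subgroup.map_eq_bot_iff, QuotientGroup.ker_mk']
    exact hA.not_le_center hc
  exact ((hG.to_quotient _).to_subgroup _).natCast_card_eq_zero

theorem natCast_card_isMaximalCommutative_eq_one (hG : IsPGroup p G)
    (h : ∀ g ∉ center G,
      (Nat.card {A : Subgroup G // A.IsMaximalCommutative ∧ g ∈ A} : ZMod p) = 1) :
    (Nat.card {A : Subgroup G // A.IsMaximalCommutative} : ZMod p) = 1 := by
  by_cases hc : IsMulCommutative G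
  · rw [card_isMaximalCommutative_of_isMulCommutative, Nat.cast_one]
  classical
  set Q := G ⧸ center G
  set S := {A : Subgroup G // A.IsMaximalCommutative}
  let π := QuotientGroup.mk' (center G)
  have := Fintype.ofFinite Q
  have := Fintype.ofFinite S
  have : Nontrivial Q := QuotientGroup.nontrivial_iff.2 (mt center_eq_top_iff.1 hc)
  have hpairs : ∑ c : Q, (Nat.card {A : S // c ∈ A.1.map π} : ZMod p) = 0 := by
    rw [← Nat.cast_sum, Fintype.sum_natCard_subtype_comm, Nat.cast_sum]
    exact Finset.sum_eq_zero fun A _ => hG.natCast_card_map_mk_center_eq_zero hc A.2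
  have hfiber (c : Q) : (Nat.card {A : S // c ∈ A.1.map π} : ZMod p) =
      if c = 1 then (Nat.card S : ZMod p) else 1 := by
    split_ifs with hc1
    · rw [Nat.card_congr (Equiv.subtypeUnivEquiv fun A => hc1 ▸ one_mem _)]
    · obtain ⟨g, rfl⟩ := QuotientGroup.mk_surjective c
      rw [Nat.card_congr ((Equiv.subtypeEquivRight fun A =>
          QuotientGroup.mk_mem_map_mk'_iff A.2.center_le).trans
        (Equiv.subtypeSubtypeEquivSubtypeInter (·.IsMaximalCommutative) (g ∈ ·)))]
      exact h g fun hg => hc1 ((QuotientGroup.eq_one_iff g).2 hg)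
  rw [Fintype.sum_congr _ _ hfiber, Fintype.sum_ite_eq_else_one, ← Nat.card_eq_fintype_card,
    (hG.to_quotient _).natCast_card_eq_zero, zero_add, sub_eq_zero] at hpairs
  exact hpairs

end IsPGroup

theorem maximal_abelian_count_mod_p {p : ℕ} (hp : p.Prime) {G : Type*} [Group G]
    [Finite G] (hG : IsPGroup p G) :
    Nat.card {A : Subgroup G // Maximal (fun H : Subgroup G => IsMulCommutative H) A} ≡ 1 [MOD p] := by
  have := Fact.mk hp
  rw [← ZMod.natCast_eq_natCast_iff, Nat.cast_one]
  induction h : Nat.card G using Nat.strong_induction_on generalizing G with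
  | _ n ih =>
    subst h
    refine hG.natCast_card_isMaximalCommutative_eq_one fun g hg => ?_
    have hlt : Nat.card (centralizer {g}) < Nat.card G :=
      (card_le_card_group _).lt_of_ne fun h =>
        hg (centralizer_eq_top_iff_subset.1 ((card_eq_iff_eq_top _).1 h) rfl)
    rw [Nat.card_congr (isMaximalCommutativeMemEquiv g)]
    exact ih _ hlt (hG.to_subgroup _) rfl
end

section
/- Let G be a finite p-group and let S ≤ T be subgroups of G. If S is normal in T and T/S is elementary abelian of rank k (i.e., T/S ≅ (Z/pZ)^k), then the Möbius function of the subgroup lattice of G satisfies μ(S,T) = (-1)^k · p^{k(k-1)/2}; otherwise μ(S,T) = 0. -/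
/-- The defining property of the Möbius function of the subgroup lattice of `G`:
`μ S S = 1` and `∑_{S ⊆ U ⊆ T} μ S U = 0` whenever `S ⊊ T`. -/
def IsSubgroupMobius {G : Type*} [Group G] (μ : Subgroup G → Subgroup G → ℤ) : Prop :=
  (∀ S : Subgroup G, μ S S = 1) ∧
  ∀ S T : Subgroup G, S < T → ∑ᶠ U ∈ {U : Subgroup G | S ≤ U ∧ U ≤ T}, μ S U = 0

/-!
Let `hallMobius p S U` be `(-1)^k p^(k(k-1)/2)` when `U ⧸ S` is elementary abelian of rank `k`,
and `0` otherwise. The recursion determines `μ S T` for `S ≤ T`, so it suffices that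
`∑_{S ≤ U ≤ T} hallMobius p S U = 0` whenever `S < T`. Only subgroups normalizing `S` contribute,
so the sum moves to `Q = N_T(S) ⧸ S`, a nontrivial `p`-group since normalizers grow in nilpotent
groups, where it runs over the elementary abelian subgroups `A` of `Q`. Fix a central `z ∈ Q` of
order `p` and group the `A` with `z ∉ A` by `B = A ⊔ ⟨z⟩`, again elementary abelian. If `B` has
rank `k + 1`, these `A` are the complements of the line `⟨z⟩` in the `𝔽_p`-space `B`: there are
`p^k` of them, each of rank `k`, and `(-1)^(k+1) p^(k(k+1)/2) + p^k (-1)^k p^(k(k-1)/2) = 0`.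
-/

open scoped commutatorElement

/-- For `S ≤ U` this says that `S` is normal in `U` with `U ⧸ S` elementary abelian: normality
follows from `⁅u, s⁆ ∈ S`. -/
def IsElemAbelianSection {G : Type*} [Group G] (p : ℕ) (S U : Subgroup G) : Prop :=
  ∀ x ∈ U, ∀ y ∈ U, x ^ p ∈ S ∧ ⁅x, y⁆ ∈ S

def mobiusOfRank (p k : ℕ) : ℤ := (-1) ^ k * (p : ℤ) ^ (k * (k - 1) / 2)

theorem mobiusOfRank_zero (p : ℕ) : mobiusOfRank p 0 = 1 := by
  simp [mobiusOfRank]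

theorem mobiusOfRank_succ_add (p k : ℕ) :
    mobiusOfRank p (k + 1) + p ^ k * mobiusOfRank p k = 0 := by
  rw [mobiusOfRank, mobiusOfRank, Nat.triangle_succ, pow_add, pow_succ]
  ring

section Sections

variable {G H : Type*} [Group G] [Group H] {p : ℕ}

theorem IsElemAbelianSection.mono {S U V : Subgroup G} (h : IsElemAbelianSection p S U)
    (hVU : V ≤ U) : IsElemAbelianSection p S V :=
  fun x hx y hy => h x (hVU hx) y (hVU hy)

theorem isElemAbelianSection_self (S : Subgroup G) : IsElemAbelianSection p S S :=
  fun x hx y hy => ⟨S.pow_mem hx p, by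
    rw [commutatorElement_def]
    exact S.mul_mem (S.mul_mem (S.mul_mem hx hy) (S.inv_mem hx)) (S.inv_mem hy)⟩

theorem IsElemAbelianSection.le_normalizer {S U : Subgroup G} (h : IsElemAbelianSection p S U)
    (hSU : S ≤ U) : U ≤ Subgroup.normalizer S := by
  rw [Subgroup.le_normalizer_iff]
  intro u hu s hs
  simpa [commutatorElement_def, mul_assoc] using S.mul_mem (h u hu s (hSU hs)).2 hs

theorem IsElemAbelianSection.normal {K : Subgroup G} (h : IsElemAbelianSection p K ⊤) :
    K.Normal :=
  ⟨fun k hk g => by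
    simpa [commutatorElement_def, mul_assoc] using K.mul_mem (h g trivial k trivial).2 hk⟩

theorem isElemAbelianSection_map_iff (f : G →* H) (U : Subgroup G) :
    IsElemAbelianSection p ⊥ (U.map f) ↔ IsElemAbelianSection p f.ker U := by
  simp [IsElemAbelianSection, ← map_pow, ← map_commutatorElement]

theorem isElemAbelianSection_subgroupOf_iff {S U N : Subgroup G} (hUN : U ≤ N) :
    IsElemAbelianSection p (S.subgroupOf N) (U.subgroupOf N) ↔ IsElemAbelianSection p S U := by
  simp only [IsElemAbelianSection, Subgroup.mem_subgroupOf, Subtype.forall]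
  exact ⟨fun h x hx y hy => h x (hUN hx) hx y (hUN hy) hy, fun h x _ hx y _ hy => h x hx y hy⟩

theorem isElemAbelianSection_bot_top_iff :
    IsElemAbelianSection p (⊥ : Subgroup H) ⊤ ↔
      (∀ x : H, x ^ p = 1) ∧ ∀ x y : H, x * y = y * x := by
  simp [IsElemAbelianSection, commutatorElement_eq_one_iff_mul_comm, forall_and]

end Sections

section LinearAlgebra

variable {K V : Type*} [Field K] [AddCommGroup V] [Module K V]

theorem Submodule.isCompl_span_singleton_iff {v : V} (hv : v ≠ 0) {W : Submodule K V} :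
    IsCompl (K ∙ v) W ↔ v ∉ W ∧ W ⊔ (K ∙ v) = ⊤ := by
  rw [isCompl_comm, isCompl_iff, disjoint_span_singleton' hv, codisjoint_iff]

theorem Submodule.card_mul_card_of_isCompl {L W : Submodule K V} (h : IsCompl L W) :
    Nat.card L * Nat.card W = Nat.card V := by
  rw [← Nat.card_prod, Nat.card_congr (prodEquivOfIsCompl L W h).toEquiv]

/-- Complements of `L` correspond to projections onto `L`, which form a coset of the kernel of
restriction `(V →ₗ L) → End L`. -/
theorem Submodule.card_isCompl_mul_card_end (L : Submodule K V) :
    Nat.card {W // IsCompl L W} * Nat.card (Module.End K L) = Nat.card (V →ₗ[K] L) := by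
  let restrict := (LinearMap.lcomp K L L.subtype).toAddMonoidHom
  obtain ⟨W₀, hW₀⟩ := L.exists_isCompl
  have h₀ : restrict (L.projectionOnto W₀ hW₀) = LinearMap.id :=
    LinearMap.ext (projectionOnto_apply_left hW₀)
  have hsurj : Function.Surjective restrict := fun g =>
    ⟨g ∘ₗ L.projectionOnto W₀ hW₀, by ext x; simp [restrict, projectionOnto_apply_left hW₀]⟩
  have hcompl : {W // IsCompl L W} ≃ restrict.ker :=
    L.isComplEquivProj.trans <|
      (Equiv.subtypeEquivRight fun f => by
        rw [Set.mem_preimage, Set.mem_singleton_iff, h₀, LinearMap.ext_iff]; rfl).trans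
      (restrict.fiberEquivKer _)
  rw [Nat.card_congr hcompl, ← AddSubgroup.card_mul_index restrict.ker, AddSubgroup.index_ker,
    AddMonoidHom.range_eq_top.mpr hsurj, AddSubgroup.card_top]

variable [Finite V]

theorem Submodule.card_isCompl_span_singleton_mul {v : V} (hv : v ≠ 0) :
    Nat.card {W // IsCompl (K ∙ v) W} * Nat.card K = Nat.card V := by
  have : Module.Finite K V := Module.Finite.of_finite
  let e := LinearEquiv.toSpanNonzeroSingleton K V v hv
  have hend : Nat.card (Module.End K (K ∙ v)) = Nat.card K :=
    Nat.card_congr ((e.arrowCongr e).symm.trans (LinearMap.ringLmapEquivSelf K K K)).toEquiv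
  have hdual : Nat.card (V →ₗ[K] K ∙ v) = Nat.card V :=
    Nat.card_congr (e.congrRight.symm.trans
      (LinearEquiv.ofFinrankEq _ _ Subspace.dual_finrank_eq)).toEquiv
  rw [← hend, card_isCompl_mul_card_end, hdual]

end LinearAlgebra

section ElementaryAbelian

open scoped IsMulCommutative

variable {p : ℕ} {H : Type*} [Group H] [IsMulCommutative H] [Finite H]

theorem exists_mulEquiv_pi_zmod (hp : p.Prime) (hH : ∀ x : H, x ^ p = 1) :
    ∃ k : ℕ, Nonempty (H ≃* (Fin k → Multiplicative (ZMod p))) := by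
  have : Fact p.Prime := ⟨hp⟩
  have : Module (ZMod p) (Additive H) :=
    AddCommGroup.zmodModule fun x => congrArg Additive.ofMul (hH x.toMul)
  let b := Module.finBasis (ZMod p) (Additive H)
  exact ⟨_, ⟨(AddEquiv.toMultiplicativeRight b.equivFun.toAddEquiv).trans
    (MulEquiv.funMultiplicative _ _)⟩⟩

theorem card_complements_zpowers (hp : p.Prime) (hH : ∀ x : H, x ^ p = 1) {z : H} (hz : z ≠ 1) :
    Nat.card {A : Subgroup H // z ∉ A ∧ A ⊔ Subgroup.zpowers z = ⊤} * p = Nat.card H ∧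
    ∀ A : Subgroup H, z ∉ A → A ⊔ Subgroup.zpowers z = ⊤ → Nat.card A * p = Nat.card H := by
  have : Fact p.Prime := ⟨hp⟩
  have : Module (ZMod p) (Additive H) :=
    AddCommGroup.zmodModule fun x => congrArg Additive.ofMul (hH x.toMul)
  let e : Subgroup H ≃o Submodule (ZMod p) (Additive H) :=
    Subgroup.toAddSubgroup.trans (AddSubgroup.toZModSubmodule p)
  have he : e (Subgroup.zpowers z) = ZMod p ∙ Additive.ofMul z := by
    refine le_antisymm ?_ (Submodule.span_le.mpr (by simp [e]))
    rw [← e.le_symm_apply, Subgroup.zpowers_le]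
    exact Submodule.mem_span_singleton_self (Additive.ofMul z)
  have hv : Additive.ofMul z ≠ 0 := hz
  have key : ∀ A : Subgroup H, z ∉ A ∧ A ⊔ Subgroup.zpowers z = ⊤ ↔
      IsCompl (ZMod p ∙ Additive.ofMul z) (e A) := by
    intro A
    rw [Submodule.isCompl_span_singleton_iff hv, ← he, ← e.map_sup, ← e.map_top,
      e.injective.eq_iff]
    rfl
  refine ⟨?_, fun A hzA hA => ?_⟩
  · rw [Nat.card_congr (e.toEquiv.subtypeEquiv key)]
    have h := Submodule.card_isCompl_span_singleton_mul (K := ZMod p) hv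
    rw [Nat.card_zmod] at h
    exact h
  · have hL := Submodule.card_mul_card_of_isCompl ((key A).mp ⟨hzA, hA⟩)
    rw [Nat.card_congr (LinearEquiv.toSpanNonzeroSingleton _ _ _ hv).toEquiv.symm,
      Nat.card_zmod, mul_comm] at hL
    exact hL

end ElementaryAbelian

open scoped Classical in
noncomputable def hallMobius {G : Type*} [Group G] (p : ℕ) (S U : Subgroup G) : ℤ :=
  if IsElemAbelianSection p S U then mobiusOfRank p (Nat.log p (S.relIndex U)) else 0

section HallMobius

variable {G : Type*} [Group G] {p : ℕ} {S U : Subgroup G}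

theorem hallMobius_of_relIndex_eq (hp : 1 < p) (h : IsElemAbelianSection p S U) {k : ℕ}
    (hk : S.relIndex U = p ^ k) : hallMobius p S U = mobiusOfRank p k := by
  rw [hallMobius, if_pos h, hk, Nat.log_pow hp]

theorem IsElemAbelianSection.of_hallMobius_ne_zero (h : hallMobius p S U ≠ 0) :
    IsElemAbelianSection p S U := by
  by_contra hSU
  exact h (if_neg hSU)

theorem hallMobius_self (S : Subgroup G) : hallMobius p S S = 1 := by
  rw [hallMobius, if_pos (isElemAbelianSection_self S), Subgroup.relIndex_self, Nat.log_one_right,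
    mobiusOfRank_zero]

end HallMobius

section PGroup

variable {Q : Type*} [Group Q] {p : ℕ}

theorem IsPGroup.exists_mem_center_ne_one_pow_eq_one [Finite Q] [Fact p.Prime] [Nontrivial Q]
    (hQ : IsPGroup p Q) : ∃ z ∈ Subgroup.center Q, z ≠ 1 ∧ z ^ p = 1 := by
  obtain ⟨n, hn, hcard⟩ := (hQ.to_subgroup _).nontrivial_iff_card.mp hQ.center_nontrivial
  obtain ⟨g, hg⟩ := exists_prime_orderOf_dvd_card' p (hcard ▸ dvd_pow_self p hn.ne')
  rw [← Subgroup.orderOf_coe] at hg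
  exact ⟨g, g.2, fun h => (Fact.out : p.Prime).one_lt.ne' (by rw [← hg, h, orderOf_one]),
    hg ▸ pow_orderOf_eq_one _⟩

theorem IsElemAbelianSection.sup_zpowers {A : Subgroup Q} (hA : IsElemAbelianSection p ⊥ A)
    {z : Q} (hz : z ∈ Subgroup.center Q) (hzp : z ^ p = 1) :
    IsElemAbelianSection p ⊥ (A ⊔ Subgroup.zpowers z) := by
  have hcomm : ∀ (g : Q) (i : ℤ), Commute g (z ^ i) := fun g i =>
    (show Commute g z from Subgroup.mem_center_iff.mp hz g).zpow_right i
  have : (Subgroup.zpowers z).Normal := ⟨fun n hn g => by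
    obtain ⟨i, rfl⟩ := Subgroup.mem_zpowers_iff.mp hn
    rwa [(hcomm g i).eq, mul_inv_cancel_right]⟩
  simp only [IsElemAbelianSection, Subgroup.mem_bot, commutatorElement_eq_one_iff_commute] at hA ⊢
  intro x hx y hy
  obtain ⟨a, ha, _, ⟨i, rfl⟩, rfl⟩ := Subgroup.mem_sup_of_normal_right.mp hx
  obtain ⟨b, hb, _, ⟨j, rfl⟩, rfl⟩ := Subgroup.mem_sup_of_normal_right.mp hy
  refine ⟨?_, ((hA a ha b hb).2.mul_right (hcomm a _)).mul_left
    ((hcomm b _).symm.mul_right (Commute.zpow_zpow_self z _ _))⟩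
  rw [(hcomm a _).mul_pow, (hA a ha a ha).1, one_mul, ← zpow_natCast, ← zpow_mul, mul_comm,
    zpow_mul, zpow_natCast, hzp, one_zpow]

theorem IsElemAbelianSection.card_complements_zpowers [Finite Q] (hp : p.Prime) {B : Subgroup Q}
    (hB : IsElemAbelianSection p ⊥ B) {z : Q} (hzB : z ∈ B) (hz : z ≠ 1) :
    Nat.card {A : Subgroup Q // z ∉ A ∧ A ⊔ Subgroup.zpowers z = B} * p = Nat.card B ∧
    ∀ A : Subgroup Q, z ∉ A → A ⊔ Subgroup.zpowers z = B → Nat.card A * p = Nat.card B := by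
  have hpow : ∀ x : B, x ^ p = 1 := fun x => Subtype.ext (Subgroup.mem_bot.mp (hB x x.2 x x.2).1)
  have : IsMulCommutative B := ⟨⟨fun x y => Subtype.ext <| commutatorElement_eq_one_iff_mul_comm.mp
    (Subgroup.mem_bot.mp (hB x x.2 y y.2).2)⟩⟩
  let z' : B := ⟨z, hzB⟩
  obtain ⟨hcount, hcard⟩ := _root_.card_complements_zpowers hp hpow (z := z')
    (fun h => hz (congrArg Subtype.val h))
  have hiff : ∀ A' : Subgroup B, z' ∉ A' ∧ A' ⊔ Subgroup.zpowers z' = ⊤ ↔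
      z ∉ A'.map B.subtype ∧ A'.map B.subtype ⊔ Subgroup.zpowers z = B := by
    intro A'
    have hmem : z ∈ A'.map B.subtype ↔ z' ∈ A' :=
      Subgroup.mem_map_iff_mem (K := A') (x := z') B.subtype_injective
    have hzpow : Subgroup.zpowers z = (Subgroup.zpowers z').map B.subtype :=
      (MonoidHom.map_zpowers B.subtype z').symm
    rw [hmem, hzpow, ← Subgroup.map_sup, ← (Subgroup.map_injective B.subtype_injective).eq_iff,
      ← MonoidHom.range_eq_map, Subgroup.range_subtype]
  refine ⟨?_, fun A hzA hA => ?_⟩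
  · have e : {A' : Subgroup B // z' ∉ A' ∧ A' ⊔ Subgroup.zpowers z' = ⊤} ≃
        {A : Subgroup Q // z ∉ A ∧ A ⊔ Subgroup.zpowers z = B} :=
      ((Subgroup.MapSubtype.orderIso B).toEquiv.subtypeEquiv
        (q := fun A => z ∉ A.1 ∧ A.1 ⊔ Subgroup.zpowers z = B) hiff).trans
      (Equiv.subtypeSubtypeEquivSubtype (p := (· ≤ B))
        fun {A} (h : z ∉ A ∧ A ⊔ Subgroup.zpowers z = B) => h.2 ▸ le_sup_left)
    rw [← Nat.card_congr e, hcount]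
  · have hAB : A ≤ B := hA ▸ le_sup_left
    obtain ⟨hzA', hA'⟩ := (hiff (A.subgroupOf B)).mpr (by
      rwa [Subgroup.map_subgroupOf_eq_of_le hAB, and_iff_right hzA])
    have h := hcard _ hzA' hA'
    rwa [Nat.card_congr (Subgroup.subgroupOfEquivOfLe hAB).toEquiv] at h

open Finset Classical in
theorem IsElemAbelianSection.hallMobius_add_sum_complements [Finite Q] (hp : p.Prime)
    (hQ : IsPGroup p Q) [Fintype (Subgroup Q)] {B : Subgroup Q}
    (hB : IsElemAbelianSection p ⊥ B) {z : Q} (hzB : z ∈ B) (hz : z ≠ 1) :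
    hallMobius p ⊥ B +
      ∑ A ∈ univ.filter (fun A => z ∉ A ∧ A ⊔ Subgroup.zpowers z = B), hallMobius p ⊥ A = 0 := by
  have : Fact p.Prime := ⟨hp⟩
  obtain ⟨hcount, hcard⟩ := hB.card_complements_zpowers hp hzB hz
  obtain ⟨m, hm⟩ := (hQ.to_subgroup B).exists_card_eq
  obtain ⟨k, rfl⟩ : ∃ k, m = k + 1 := Nat.exists_eq_add_one_of_ne_zero <| by
    rintro rfl
    rw [pow_zero, Subgroup.card_eq_one] at hm
    exact hz (Subgroup.mem_bot.mp (hm ▸ hzB))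
  have hval : ∀ A ∈ univ.filter (fun A => z ∉ A ∧ A ⊔ Subgroup.zpowers z = B),
      hallMobius p ⊥ A = mobiusOfRank p k := by
    intro A hA
    obtain ⟨hzA, hAB⟩ := (mem_filter.mp hA).2
    refine hallMobius_of_relIndex_eq hp.one_lt (hB.mono (hAB ▸ le_sup_left)) ?_
    rw [Subgroup.relIndex_bot_left]
    exact Nat.eq_of_mul_eq_mul_right hp.pos (by rw [hcard A hzA hAB, hm, pow_succ])
  have hnum : (univ.filter (fun A => z ∉ A ∧ A ⊔ Subgroup.zpowers z = B)).card = p ^ k := by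
    rw [← Fintype.card_subtype, ← Nat.card_eq_fintype_card]
    exact Nat.eq_of_mul_eq_mul_right hp.pos (by rw [hcount, hm, pow_succ])
  rw [sum_congr rfl hval, sum_const, hnum, nsmul_eq_mul,
    hallMobius_of_relIndex_eq hp.one_lt hB (by rw [Subgroup.relIndex_bot_left, hm])]
  push_cast
  exact mobiusOfRank_succ_add p k

end PGroup

open Finset Classical in
theorem finsum_hallMobius_bot_eq_zero {Q : Type*} [Group Q] [Finite Q] [Nontrivial Q] {p : ℕ}
    (hp : p.Prime) (hQ : IsPGroup p Q) : ∑ᶠ A : Subgroup Q, hallMobius p ⊥ A = 0 := by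
  have : Fact p.Prime := ⟨hp⟩
  have : Fintype (Subgroup Q) := Fintype.ofFinite _
  obtain ⟨z, hzc, hz, hzp⟩ := hQ.exists_mem_center_ne_one_pow_eq_one
  let E := univ.filter (IsElemAbelianSection p (⊥ : Subgroup Q))
  have hmaps : ∀ A ∈ E.filter (z ∉ ·), A ⊔ Subgroup.zpowers z ∈ E.filter (z ∈ ·) := by
    intro A hA
    simp only [E, mem_filter, mem_univ, true_and] at hA ⊢
    exact ⟨hA.1.sup_zpowers hzc hzp, Subgroup.mem_sup_right (Subgroup.mem_zpowers z)⟩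
  have hfiber : ∀ B ∈ E.filter (z ∈ ·), (E.filter (z ∉ ·)).filter (· ⊔ Subgroup.zpowers z = B) =
      univ.filter (fun A => z ∉ A ∧ A ⊔ Subgroup.zpowers z = B) := by
    intro B hB
    simp only [E, mem_filter, mem_univ, true_and] at hB
    ext A
    simp only [E, mem_filter, mem_univ, true_and]
    exact ⟨fun h => ⟨h.1.2, h.2⟩, fun h => ⟨⟨hB.1.mono (h.2 ▸ le_sup_left), h.1⟩, h.2⟩⟩
  rw [finsum_eq_sum_of_fintype,
    ← sum_filter_of_ne fun A _ h => IsElemAbelianSection.of_hallMobius_ne_zero h,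
    ← sum_filter_add_sum_filter_not E (z ∈ ·), ← sum_fiberwise_of_maps_to hmaps,
    ← sum_add_distrib]
  refine sum_eq_zero fun B hB => ?_
  rw [hfiber B hB]
  simp only [E, mem_filter, mem_univ, true_and] at hB
  exact hB.1.hallMobius_add_sum_complements hp hQ hB.2 hz

section Correspondence

variable {G : Type*} [Group G] {p : ℕ} {S N : Subgroup G} [(S.subgroupOf N).Normal]

theorem hallMobius_eq_hallMobius_map_mk' {U : Subgroup G} (hUN : U ≤ N) :
    hallMobius p S U =
      hallMobius p ⊥ ((U.subgroupOf N).map (QuotientGroup.mk' (S.subgroupOf N))) := by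
  have hsec : IsElemAbelianSection p ⊥
      ((U.subgroupOf N).map (QuotientGroup.mk' (S.subgroupOf N))) ↔
      IsElemAbelianSection p S U := by
    rw [isElemAbelianSection_map_iff, QuotientGroup.ker_mk',
      isElemAbelianSection_subgroupOf_iff hUN]
  have hrel : S.relIndex U = (⊥ : Subgroup (N ⧸ S.subgroupOf N)).relIndex
      ((U.subgroupOf N).map (QuotientGroup.mk' (S.subgroupOf N))) := by
    rw [Subgroup.relIndex_bot_left, ← Subgroup.relIndex_ker, QuotientGroup.ker_mk',
      Subgroup.relIndex_subgroupOf hUN]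
  classical
  rw [hallMobius, hallMobius, hrel]
  exact if_congr hsec.symm rfl rfl

theorem bijOn_map_mk'_subgroupOf (hSN : S ≤ N) :
    Set.BijOn (fun U => (U.subgroupOf N).map (QuotientGroup.mk' (S.subgroupOf N)))
      {U | S ≤ U ∧ U ≤ N} Set.univ := by
  refine Set.InvOn.bijOn (f' := fun A => (A.comap (QuotientGroup.mk' _)).map N.subtype)
    ⟨?_, ?_⟩ (Set.mapsTo_univ _ _) ?_
  · rintro U ⟨hSU, hUN⟩
    dsimp only
    rw [QuotientGroup.comap_map_mk', sup_of_le_right (Subgroup.subgroupOf_mono N hSU),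
      Subgroup.subgroupOf_map_subtype, inf_of_le_left hUN]
  · intro A _
    have h : ((A.comap (QuotientGroup.mk' (S.subgroupOf N))).map N.subtype).subgroupOf N =
        A.comap (QuotientGroup.mk' (S.subgroupOf N)) :=
      Subgroup.comap_map_eq_self_of_injective N.subtype_injective _
    dsimp only
    rw [h, Subgroup.map_comap_eq_self_of_surjective (QuotientGroup.mk'_surjective _)]
  · intro A _
    refine ⟨fun s hs => ⟨⟨s, hSN hs⟩, ?_, rfl⟩, Subgroup.map_subtype_le _⟩
    rw [SetLike.mem_coe, Subgroup.mem_comap, QuotientGroup.mk'_apply,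
      (QuotientGroup.eq_one_iff _).mpr (Subgroup.mem_subgroupOf.mpr hs)]
    exact A.one_mem

end Correspondence

section PGroupLattice

variable {G : Type*} [Group G] {p : ℕ}

theorem Subgroup.lt_inf_normalizer_of_lt [Group.IsNilpotent G] {S T : Subgroup G} (hST : S < T) :
    S < T ⊓ normalizer S := by
  have h := Group.normalizerCondition_of_isNilpotent (S.subgroupOf T)
    (lt_top_iff_ne_top.mpr fun h => hST.not_ge (subgroupOf_eq_top.mp h))
  rwa [← subgroupOf_normalizer_eq hST.le, ← map_subtype_lt_map_subtype, subgroupOf_map_subtype,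
    subgroupOf_map_subtype, inf_of_le_left hST.le, inf_comm] at h

theorem finsum_hallMobius_eq_zero [Finite G] (hp : p.Prime) (hG : IsPGroup p G)
    {S T : Subgroup G} (hST : S < T) :
    ∑ᶠ U ∈ {U : Subgroup G | S ≤ U ∧ U ≤ T}, hallMobius p S U = 0 := by
  have : Fact p.Prime := ⟨hp⟩
  have : Group.IsNilpotent G := hG.isNilpotent
  set N := T ⊓ Subgroup.normalizer S
  have hSN : S < N := Subgroup.lt_inf_normalizer_of_lt hST
  have : (S.subgroupOf N).Normal := Subgroup.normal_subgroupOf_of_le_normalizer inf_le_right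
  have : Nontrivial (N ⧸ S.subgroupOf N) :=
    QuotientGroup.nontrivial_iff.mpr fun h => hSN.not_ge (Subgroup.subgroupOf_eq_top.mp h)
  have hsupp : {U | S ≤ U ∧ U ≤ T} ∩ Function.support (hallMobius p S) =
      {U | S ≤ U ∧ U ≤ N} ∩ Function.support (hallMobius p S) := by
    ext U
    simp only [Set.mem_inter_iff, Set.mem_ofPred_eq, Function.mem_support, N, le_inf_iff]
    refine ⟨fun ⟨⟨hSU, hUT⟩, h⟩ => ⟨⟨hSU, hUT, ?_⟩, h⟩, fun ⟨⟨hSU, hUT, _⟩, h⟩ => ⟨⟨hSU, hUT⟩, h⟩⟩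
    exact (IsElemAbelianSection.of_hallMobius_ne_zero h).le_normalizer hSU
  rw [finsum_mem_inter_support_eq _ _ _ hsupp, finsum_mem_eq_of_bijOn _
    (bijOn_map_mk'_subgroupOf hSN.le) fun U hU => hallMobius_eq_hallMobius_map_mk' hU.2,
    finsum_mem_univ]
  exact finsum_hallMobius_bot_eq_zero hp ((hG.to_subgroup N).to_quotient _)

theorem isSubgroupMobius_hallMobius [Finite G] (hp : p.Prime) (hG : IsPGroup p G) :
    IsSubgroupMobius (hallMobius (G := G) p) :=
  ⟨hallMobius_self, fun _ _ => finsum_hallMobius_eq_zero hp hG⟩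

theorem IsSubgroupMobius.eq_of_le [Finite G] {μ ν : Subgroup G → Subgroup G → ℤ}
    (hμ : IsSubgroupMobius μ) (hν : IsSubgroupMobius ν) {S T : Subgroup G} (hST : S ≤ T) :
    μ S T = ν S T := by
  induction T using WellFoundedLT.induction with
  | ind T ih =>
    rcases hST.eq_or_lt with rfl | hlt
    · rw [hμ.1, hν.1]
    have hsplit : {U | S ≤ U ∧ U ≤ T} = insert T {U | S ≤ U ∧ U < T} := by
      ext U
      simp only [Set.mem_insert_iff, Set.mem_ofPred_eq]
      constructor
      · rintro ⟨hSU, hUT⟩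
        exact hUT.eq_or_lt.imp id (⟨hSU, ·⟩)
      · rintro (rfl | ⟨hSU, hUT⟩)
        exacts [⟨hST, le_rfl⟩, ⟨hSU, hUT.le⟩]
    have hT : T ∉ {U | S ≤ U ∧ U < T} := fun h => lt_irrefl T h.2
    have hμT := hμ.2 S T hlt
    have hνT := hν.2 S T hlt
    rw [hsplit, finsum_mem_insert _ hT (Set.toFinite _)] at hμT hνT
    rw [finsum_mem_congr rfl fun U hU => ih U hU.2 hU.1] at hμT
    linarith

end PGroupLattice

section Statement

variable {G : Type*} [Group G] {p : ℕ}

theorem isElemAbelianSection_and_relIndex_eq_of_surjective {S T : Subgroup G} {k : ℕ}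
    (φ : T →* (Fin k → Multiplicative (ZMod p))) (hφ : Function.Surjective φ)
    (hker : φ.ker = S.subgroupOf T) : IsElemAbelianSection p S T ∧ S.relIndex T = p ^ k := by
  refine ⟨?_, ?_⟩
  · rw [← isElemAbelianSection_subgroupOf_iff le_rfl, Subgroup.subgroupOf_self, ← hker,
      ← isElemAbelianSection_map_iff, ← MonoidHom.range_eq_map, MonoidHom.range_eq_top.mpr hφ,
      isElemAbelianSection_bot_top_iff]
    refine ⟨fun x => funext fun i => ?_, fun x y => mul_comm x y⟩
    rw [Pi.pow_apply, ← ofAdd_toAdd (x i), ← ofAdd_nsmul, nsmul_eq_mul, ZMod.natCast_self,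
      zero_mul, ofAdd_zero, Pi.one_apply]
  · rw [Subgroup.relIndex, ← hker, Subgroup.index_ker, MonoidHom.range_eq_top.mpr hφ,
      Subgroup.card_top, Nat.card_fun, Nat.card_fin, Nat.card_congr Multiplicative.toAdd,
      Nat.card_zmod]

theorem IsElemAbelianSection.exists_surjective_pi_zmod [Finite G] (hp : p.Prime)
    {S T : Subgroup G} (h : IsElemAbelianSection p S T) :
    ∃ k : ℕ, ∃ φ : T →* (Fin k → Multiplicative (ZMod p)),
      Function.Surjective φ ∧ φ.ker = S.subgroupOf T := by
  have hK : IsElemAbelianSection p (S.subgroupOf T) ⊤ := by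
    rwa [← Subgroup.subgroupOf_self, isElemAbelianSection_subgroupOf_iff le_rfl]
  have : (S.subgroupOf T).Normal := hK.normal
  obtain ⟨hpow, hcomm⟩ := isElemAbelianSection_bot_top_iff.mp <| by
    rwa [← Subgroup.map_top_of_surjective _ (QuotientGroup.mk'_surjective (S.subgroupOf T)),
      isElemAbelianSection_map_iff, QuotientGroup.ker_mk']
  have : IsMulCommutative (T ⧸ S.subgroupOf T) := ⟨⟨hcomm⟩⟩
  obtain ⟨k, ⟨e⟩⟩ := exists_mulEquiv_pi_zmod hp hpow
  refine ⟨k, e.toMonoidHom.comp (QuotientGroup.mk' _),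
    e.surjective.comp (QuotientGroup.mk'_surjective _), ?_⟩
  ext x
  simp

end Statement

theorem mobius_subgroup_lattice_pGroup {p : ℕ} (hp : p.Prime) {G : Type*} [Group G]
    [Finite G] (hG : IsPGroup p G) (μ : Subgroup G → Subgroup G → ℤ)
    (hμ : IsSubgroupMobius μ) (S T : Subgroup G) (hST : S ≤ T) :
    (∀ k : ℕ, (∃ φ : T →* (Fin k → Multiplicative (ZMod p)),
        Function.Surjective φ ∧ φ.ker = S.subgroupOf T) →
      μ S T = (-1) ^ k * (p : ℤ) ^ (k * (k - 1) / 2)) ∧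
    ((¬ ∃ k : ℕ, ∃ φ : T →* (Fin k → Multiplicative (ZMod p)),
        Function.Surjective φ ∧ φ.ker = S.subgroupOf T) →
      μ S T = 0) := by
  have hμT : μ S T = hallMobius p S T := hμ.eq_of_le (isSubgroupMobius_hallMobius hp hG) hST
  refine ⟨fun k ⟨φ, hφ, hker⟩ => ?_, fun hne => ?_⟩
  · obtain ⟨hsec, hrel⟩ := isElemAbelianSection_and_relIndex_eq_of_surjective φ hφ hker
    rw [hμT, hallMobius_of_relIndex_eq hp.one_lt hsec hrel, mobiusOfRank]
  · rw [hμT, hallMobius, if_neg fun h => hne (h.exists_surjective_pi_zmod hp)]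
end

section
/- Let G be a finite p-group, Z its center, and suppose Z is not a maximal abelian subgroup of G. Then the number of maximal abelian subgroups of G is congruent modulo p to the number of abelian subgroups T of G with Z ⊊ T and [T : Z] = p. -/
/-!
Double count the pairs `(A, T)` with `T ≤ A`, `A` maximal abelian and `Z < T`, `[T : Z] = p`.
For fixed `A` (which contains `Z`, and properly since `Z` is not maximal abelian) the `T` are the
subgroups of order `p` of the nontrivial `p`-group `A / Z`, and there are `≡ 1 (mod p)` of them.
For fixed `T` the maximal abelian subgroups containing `T` are exactly those of the proper
subgroup `C_G(T)`, and by induction on `|G|` every `p`-group has `≡ 1 (mod p)` maximal abelian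
subgroups: if its center is maximal abelian the group is abelian, otherwise the congruence being
proved reduces the count to that of the subgroups of order `p` of `G / Z`.
-/

open Subgroup

theorem Nat.card_modEq_card_subtype_rel_of_card_modEq_one {α β : Type*} [Finite α] [Finite β]
    {n : ℕ} (r : α → β → Prop) (hα : ∀ a, Nat.card {b // r a b} ≡ 1 [MOD n]) :
    Nat.card α ≡ Nat.card {x : α × β // r x.1 x.2} [MOD n] := by
  have := Fintype.ofFinite α
  rw [Nat.card_congr (Equiv.subtypeProdEquivSigmaSubtype r), Nat.card_sigma,
    Nat.card_eq_fintype_card, Fintype.card_eq_sum_ones]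
  exact (Nat.ModEq.sum fun a _ => hα a).symm

theorem Nat.card_modEq_card_of_card_rel_modEq_one {α β : Type*} [Finite α] [Finite β] {n : ℕ}
    (r : α → β → Prop) (hα : ∀ a, Nat.card {b // r a b} ≡ 1 [MOD n])
    (hβ : ∀ b, Nat.card {a // r a b} ≡ 1 [MOD n]) : Nat.card α ≡ Nat.card β [MOD n] := by
  refine (Nat.card_modEq_card_subtype_rel_of_card_modEq_one r hα).trans ?_
  rw [← Nat.card_congr ((Equiv.prodComm β α).subtypeEquiv fun _ => Iff.rfl)]
  exact (Nat.card_modEq_card_subtype_rel_of_card_modEq_one (fun b a => r a b) hβ).symm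

section PowEqOne

variable {H : Type*} [Group H] {p : ℕ}

open Equiv.Perm in
/-- McKay: rotation acts on the `p`-tuples with product `1`, whose number is `|H| ^ (p - 1)`,
and its fixed points are the constant tuples `(x, …, x)` with `x ^ p = 1`. -/
theorem card_pow_prime_eq_one_modEq_zero [Finite H] (hp : p.Prime) (hd : p ∣ Nat.card H) :
    Nat.card {x : H // x ^ p = 1} ≡ 0 [MOD p] := by
  classical
  have := Fact.mk hp
  have := Fintype.ofFinite H
  let rot : Function.End (vectorsProdEqOne H p) := fun v => VectorsProdEqOne.rotate v 1
  have hrot_iterate : ∀ k v, rot^[k] v = VectorsProdEqOne.rotate v k := by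
    intro k v
    induction k with
    | zero => exact (VectorsProdEqOne.rotate_zero v).symm
    | succ k ih =>
      rw [Function.iterate_succ_apply', ih]
      exact VectorsProdEqOne.rotate_rotate v k 1
  have hrot : rot ^ p ^ 1 = 1 := funext fun v =>
    (hrot_iterate _ v).trans (by rw [pow_one]; exact VectorsProdEqOne.rotate_length v)
  let constant (x : {x : H // x ^ p = 1}) : Function.fixedPoints rot :=
    ⟨⟨List.Vector.replicate p x, (List.prod_replicate p x.1).trans x.2⟩,
      Subtype.ext (Subtype.ext (List.rotate_replicate x.1 p 1))⟩
  have hconstant : Function.Bijective constant := by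
    refine ⟨fun x y hxy => Subtype.ext ?_, fun v => ?_⟩
    · exact List.replicate_right_injective hp.ne_zero (congrArg (fun v => v.1.1.1) hxy)
    · obtain ⟨x, hx⟩ := List.rotate_one_eq_self_iff_eq_replicate.mp
        (congrArg (fun v => v.1.1) v.2)
      rw [v.1.1.2] at hx
      refine ⟨⟨x, ?_⟩, Subtype.ext (Subtype.ext (Subtype.ext hx.symm))⟩
      rw [← List.prod_replicate, ← hx]
      exact v.1.2
  calc Nat.card {x : H // x ^ p = 1} = Fintype.card (Function.fixedPoints rot) := by
        rw [Nat.card_eq_of_bijective constant hconstant, Nat.card_eq_fintype_card]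
    _ ≡ Fintype.card (vectorsProdEqOne H p) [MOD p] := (card_fixedPoints_modEq hrot).symm
    _ = Fintype.card H ^ (p - 1) := VectorsProdEqOne.card H p
    _ ≡ 0 [MOD p] := Nat.modEq_zero_iff_dvd.2 <| (Nat.card_eq_fintype_card (α := H) ▸ hd).trans
        (dvd_pow_self _ (Nat.sub_ne_zero_of_lt hp.one_lt))

theorem zpowers_eq_of_card_eq_prime [Fact p.Prime] {K : Subgroup H} (hK : Nat.card K = p)
    {y : H} (hyK : y ∈ K) (hy : y ≠ 1) : zpowers y = K := by
  have := congrArg (map K.subtype)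
    (zpowers_eq_top_of_prime_card hK (g := ⟨y, hyK⟩) (by simpa using hy))
  rwa [MonoidHom.map_zpowers, ← MonoidHom.range_eq_map, range_subtype] at this

theorem card_orderOf_eq_prime [Finite H] (hp : p.Prime) :
    Nat.card {x : H // orderOf x = p} =
      Nat.card {K : Subgroup H // Nat.card K = p} * (p - 1) := by
  have := Fact.mk hp
  let generated (x : {x : H // orderOf x = p}) :
      Σ K : {K : Subgroup H // Nat.card K = p}, {y : K.1 // y ≠ 1} :=
    ⟨⟨zpowers x.1, by rw [Nat.card_zpowers, x.2]⟩, ⟨⟨x.1, mem_zpowers x.1⟩, fun h =>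
      hp.one_lt.ne' (x.2.symm.trans (orderOf_eq_one_iff.2 (congrArg Subtype.val h)))⟩⟩
  have hgenerated : Function.Bijective generated := by
    refine ⟨fun x x' h => Subtype.ext (congrArg (fun s => (s.2.1 : H)) h), ?_⟩
    rintro ⟨⟨K, hK⟩, ⟨y, hyK⟩, hy⟩
    obtain rfl := zpowers_eq_of_card_eq_prime hK hyK (by simpa using hy)
    exact ⟨⟨y, by rw [← Nat.card_zpowers, hK]⟩, rfl⟩
  have hfiber (K : {K : Subgroup H // Nat.card K = p}) : Nat.card {y : K.1 // y ≠ 1} = p - 1 := by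
    classical
    have := Fintype.ofFinite K
    simp [Nat.card_eq_fintype_card, Fintype.card_subtype_compl, ← K.2]
  have := Fintype.ofFinite {K : Subgroup H // Nat.card K = p}
  rw [Nat.card_eq_of_bijective generated hgenerated, Nat.card_sigma,
    Finset.sum_congr rfl fun K _ => hfiber K, Finset.sum_const, smul_eq_mul, Finset.card_univ,
    Nat.card_eq_fintype_card]

theorem card_subgroup_card_eq_prime_modEq_one [Finite H] (hp : p.Prime) (hd : p ∣ Nat.card H) :
    Nat.card {K : Subgroup H // Nat.card K = p} ≡ 1 [MOD p] := by
  have := Fact.mk hp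
  set N := Nat.card {K : Subgroup H // Nat.card K = p}
  have hsolutions : Nat.card {x : H // x ^ p = 1} = N * (p - 1) + 1 := by
    have hsplit : Nat.card {x : H // x ^ p = 1 ∧ x ≠ 1} + 1 = Nat.card {x : H // x ^ p = 1} :=
      Set.ncard_sdiff_singleton_add_one (s := {x | x ^ p = 1}) (one_pow p)
    rw [← hsplit, ← card_orderOf_eq_prime hp]
    simp only [orderOf_eq_prime_iff]
  have hNp : N ≤ N * p := Nat.le_mul_of_pos_right N hp.pos
  calc N = N + 0 := rfl
    _ ≡ N + Nat.card {x : H // x ^ p = 1} [MOD p] :=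
        Nat.ModEq.add_left N (card_pow_prime_eq_one_modEq_zero hp hd).symm
    _ = 1 + p * N := by rw [hsolutions, Nat.mul_sub_one, mul_comm p]; omega
    _ ≡ 1 [MOD p] := Nat.add_mul_mod_self_left 1 p N

end PowEqOne

namespace Subgroup

variable {G : Type*} [Group G]

theorem card_lt_relIndex_eq_card_quotient {p : ℕ} (hp : p ≠ 1) (N : Subgroup G) [N.Normal] :
    Nat.card {T : Subgroup G // N < T ∧ N.relIndex T = p} =
      Nat.card {K : Subgroup (G ⧸ N) // Nat.card K = p} := by
  have hlt : ∀ T : Subgroup G, N < T ∧ N.relIndex T = p ↔ N ≤ T ∧ N.relIndex T = p :=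
    fun T => ⟨fun h => ⟨h.1.le, h.2⟩, fun ⟨hle, hT⟩ => ⟨hle.lt_of_ne (by
      rintro rfl; exact hp (relIndex_self (H := N) ▸ hT).symm), hT⟩⟩
  refine Nat.card_congr <| (Equiv.subtypeEquivRight hlt).trans <|
    (Equiv.subtypeSubtypeEquivSubtypeInter _ _).symm.trans <|
      Equiv.subtypeEquiv (QuotientGroup.comapMk'OrderIso N).symm.toEquiv fun T => ?_
  change _ ↔ Nat.card (T.1.map (QuotientGroup.mk' N)) = p
  rw [← relIndex_ker, QuotientGroup.ker_mk']

theorem card_lt_le_relIndex_eq_subgroupOf {N A : Subgroup G} (hNA : N ≤ A) (n : ℕ) :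
    Nat.card {T : Subgroup G // N < T ∧ T ≤ A ∧ N.relIndex T = n} =
      Nat.card {T : Subgroup A // N.subgroupOf A < T ∧ (N.subgroupOf A).relIndex T = n} := by
  let e := (MapSubtype.orderIso A).symm
  refine Nat.card_congr <| (Equiv.subtypeEquivRight fun T => and_left_comm).trans <|
    (Equiv.subtypeSubtypeEquivSubtypeInter _ _).symm.trans <|
      Equiv.subtypeEquiv e.toEquiv fun T => ?_
  change _ ↔ e ⟨N, hNA⟩ < e T ∧ _
  rw [← relIndex_subgroupOf T.2, e.lt_iff_lt]
  rfl

theorem isMulCommutative_of_relIndex_prime {N T : Subgroup G} [N.Normal] (hN : N ≤ center G)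
    (hNT : (N.relIndex T).Prime) : IsMulCommutative T := by
  have := Fact.mk hNT
  have : IsCyclic (T ⧸ N.subgroupOf T) :=
    isCyclic_of_prime_card (p := N.relIndex T) (index_eq_card _).symm
  refine (QuotientGroup.mk' (N.subgroupOf T)).isMulCommutative_of_isCyclic_of_ker_le_center ?_
  rw [QuotientGroup.ker_mk']
  exact fun x hx => mem_center_iff.2 fun y => Subtype.ext (mem_center_iff.1 (hN hx) y)

theorem isMulCommutative_of_le {H K : Subgroup G} (hHK : H ≤ K) [IsMulCommutative K] :
    IsMulCommutative H :=
  .of_setLike_mul_comm fun _ ha _ hb => setLike_mul_comm (hHK ha) (hHK hb)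

theorem maximal_isMulCommutative_iff {A : Subgroup G} :
    Maximal (fun H : Subgroup G => IsMulCommutative H) A ↔ centralizer A = A := by
  refine ⟨fun hA => le_antisymm (fun x hx => ?_) (le_centralizer_iff_isMulCommutative.2 hA.1),
    fun hA => ⟨le_centralizer_iff_isMulCommutative.1 hA.ge, fun B hB hAB => ?_⟩⟩
  · have hAcomm := le_centralizer_iff_isMulCommutative.2 hA.1
    have hcomm : IsMulCommutative (closure (insert x (A : Set G))) := by
      refine isMulCommutative_closure ?_
      rintro y (rfl | hy) z (rfl | hz)
      exacts [rfl, (hx z hz).symm, hx y hy, hAcomm hz y hy]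
    exact hA.2 hcomm (fun y hy => subset_closure (Set.mem_insert_of_mem x hy))
      (subset_closure (Set.mem_insert x A))
  · calc B ≤ centralizer B := le_centralizer_iff_isMulCommutative.2 hB
      _ ≤ centralizer A := centralizer_le hAB
      _ = A := hA

theorem center_le_of_maximal_isMulCommutative {A : Subgroup G}
    (hA : Maximal (fun H : Subgroup G => IsMulCommutative H) A) : center G ≤ A :=
  maximal_isMulCommutative_iff.1 hA ▸ center_le_centralizer (A : Set G)

theorem centralizer_subgroupOf {H K : Subgroup G} (hHK : H ≤ K) :
    centralizer (H.subgroupOf K : Set K) = (centralizer H).subgroupOf K := by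
  ext x
  simp only [mem_centralizer_iff, mem_subgroupOf, SetLike.mem_coe, Subtype.forall,
    Subtype.ext_iff, coe_mul]
  exact ⟨fun h y hy => h y (hHK hy) hy, fun h y _ hy => h y hy⟩

theorem maximal_isMulCommutative_subgroupOf_centralizer_iff {T A : Subgroup G}
    (hT : IsMulCommutative T) (hA : A ≤ centralizer T) :
    Maximal (fun H : Subgroup (centralizer (T : Set G)) => IsMulCommutative H)
        (A.subgroupOf (centralizer (T : Set G))) ↔
      Maximal (fun H : Subgroup G => IsMulCommutative H) A ∧ T ≤ A := by
  have hcentralizer_le (hTA : T ≤ A) : centralizer (A : Set G) ≤ centralizer (T : Set G) :=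
    centralizer_le hTA
  rw [maximal_isMulCommutative_iff, maximal_isMulCommutative_iff, centralizer_subgroupOf hA,
    subgroupOf_inj, inf_of_le_left hA]
  refine ⟨fun h => ?_, fun ⟨h, hTA⟩ => by rw [inf_of_le_left (hcentralizer_le hTA), h]⟩
  have hTA : T ≤ A :=
    h ▸ le_inf (le_centralizer_iff.1 hA) (le_centralizer_iff_isMulCommutative.2 hT)
  exact ⟨by rwa [inf_of_le_left (hcentralizer_le hTA)] at h, hTA⟩

theorem card_maximal_isMulCommutative_ge_eq_centralizer {T : Subgroup G}
    (hT : IsMulCommutative T) :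
    Nat.card {A : Subgroup G // Maximal (fun H : Subgroup G => IsMulCommutative H) A ∧ T ≤ A} =
      Nat.card {A : Subgroup (centralizer (T : Set G)) //
        Maximal (fun H : Subgroup (centralizer (T : Set G)) => IsMulCommutative H) A} := by
  have hle {A : Subgroup G}
      (hA : Maximal (fun H : Subgroup G => IsMulCommutative H) A ∧ T ≤ A) :
      A ≤ centralizer T :=
    (maximal_isMulCommutative_iff.1 hA.1).ge.trans (centralizer_le hA.2)
  exact Nat.card_congr <| (Equiv.subtypeSubtypeEquivSubtype hle).symm.trans <|
    Equiv.subtypeEquiv (MapSubtype.orderIso _).symm.toEquiv fun A =>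
      (maximal_isMulCommutative_subgroupOf_centralizer_iff hT A.2).symm

end Subgroup

namespace IsPGroup

variable {p : ℕ} {G : Type*} [Group G] [Finite G]

theorem card_lt_relIndex_eq_modEq_one (hp : p.Prime) (hG : IsPGroup p G) {N : Subgroup G}
    [N.Normal] (hN : N ≠ ⊤) :
    Nat.card {T : Subgroup G // N < T ∧ N.relIndex T = p} ≡ 1 [MOD p] := by
  have := Fact.mk hp
  rw [card_lt_relIndex_eq_card_quotient hp.ne_one N]
  refine card_subgroup_card_eq_prime_modEq_one hp
    ((hG.to_quotient N).card_eq_or_dvd.resolve_left ?_)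
  rwa [← index_eq_card, index_eq_one]

theorem card_lt_le_relIndex_eq_modEq_one (hp : p.Prime) (hG : IsPGroup p G)
    {N A : Subgroup G} [N.Normal] (hNA : N < A) :
    Nat.card {T : Subgroup G // N < T ∧ T ≤ A ∧ N.relIndex T = p} ≡ 1 [MOD p] := by
  rw [card_lt_le_relIndex_eq_subgroupOf hNA.le]
  refine (hG.to_subgroup A).card_lt_relIndex_eq_modEq_one hp ?_
  rw [Ne, subgroupOf_eq_top]
  exact hNA.not_ge

theorem card_isMulCommutative_center_lt_relIndex_eq_modEq_one (hp : p.Prime)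
    (hG : IsPGroup p G) (hZ : center G ≠ ⊤) :
    Nat.card {T : Subgroup G // IsMulCommutative T ∧ center G < T ∧
      (center G).relIndex T = p} ≡ 1 [MOD p] := by
  rw [Nat.card_congr (Equiv.subtypeEquivRight fun T => and_iff_right_of_imp fun hT =>
    isMulCommutative_of_relIndex_prime le_rfl (hT.2 ▸ hp))]
  exact hG.card_lt_relIndex_eq_modEq_one hp hZ

theorem card_maximal_isMulCommutative_modEq_card_of_forall_ne_top (hp : p.Prime)
    (hG : IsPGroup p G)
    (hZ : ¬ Maximal (fun H : Subgroup G => IsMulCommutative H) (center G))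
    (ih : ∀ C : Subgroup G, C ≠ ⊤ → Nat.card {A : Subgroup C //
      Maximal (fun H : Subgroup C => IsMulCommutative H) A} ≡ 1 [MOD p]) :
    Nat.card {A : Subgroup G // Maximal (fun H : Subgroup G => IsMulCommutative H) A} ≡
      Nat.card {T : Subgroup G // IsMulCommutative T ∧ center G < T ∧
        (center G).relIndex T = p} [MOD p] := by
  refine Nat.card_modEq_card_of_card_rel_modEq_one (fun A T => T.1 ≤ A.1) (fun A => ?_)
    (fun T => ?_)
  · have hZA : center G < A.1 := (center_le_of_maximal_isMulCommutative A.2).lt_of_ne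
      fun h => hZ (h ▸ A.2)
    have hA_comm : IsMulCommutative A.1 := A.2.1
    have e : {T : {T : Subgroup G // IsMulCommutative T ∧ center G < T ∧
        (center G).relIndex T = p} // T.1 ≤ A.1} ≃
        {T : Subgroup G // center G < T ∧ T ≤ A.1 ∧ (center G).relIndex T = p} :=
      (Equiv.subtypeSubtypeEquivSubtypeInter _ (· ≤ A.1)).trans <| Equiv.subtypeEquivRight
        fun T => ⟨fun ⟨⟨_, hZT, hTp⟩, hTA⟩ => ⟨hZT, hTA, hTp⟩,
          fun ⟨hZT, hTA, hTp⟩ => ⟨⟨isMulCommutative_of_le hTA, hZT, hTp⟩, hTA⟩⟩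
    exact Nat.card_congr e ▸ hG.card_lt_le_relIndex_eq_modEq_one hp hZA
  · rw [Nat.card_congr (Equiv.subtypeSubtypeEquivSubtypeInter _ (T.1 ≤ ·)),
      card_maximal_isMulCommutative_ge_eq_centralizer T.2.1]
    refine ih _ fun h => T.2.2.1.not_ge ?_
    rwa [centralizer_eq_top_iff_subset] at h

theorem card_maximal_isMulCommutative_modEq_one (hp : p.Prime) (hG : IsPGroup p G) :
    Nat.card {A : Subgroup G // Maximal (fun H : Subgroup G => IsMulCommutative H) A} ≡
      1 [MOD p] := by
  induction h : Nat.card G using Nat.strong_induction_on generalizing G with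
  | _ n ih =>
    by_cases hZ : Maximal (fun H : Subgroup G => IsMulCommutative H) (center G)
    · rw [Nat.card_eq_one_iff_exists.2 ⟨⟨_, hZ⟩, fun A => Subtype.ext
        (hZ.eq_of_ge A.2.1 (center_le_of_maximal_isMulCommutative A.2))⟩]
    have hZ_ne_top : center G ≠ ⊤ := fun h => hZ ⟨inferInstance, fun _ _ _ => h ▸ le_top⟩
    have ih_proper (C : Subgroup G) (hC : C ≠ ⊤) := ih _
      (h ▸ (card_le_card_group C).lt_of_ne (mt (card_eq_iff_eq_top C).1 hC))
      (hG.to_subgroup C) rfl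
    exact (card_maximal_isMulCommutative_modEq_card_of_forall_ne_top hp hG hZ ih_proper).trans
      (card_isMulCommutative_center_lt_relIndex_eq_modEq_one hp hG hZ_ne_top)

end IsPGroup

theorem maximal_abelian_count_congr_index_p {p : ℕ} (hp : p.Prime) {G : Type*} [Group G]
    [Finite G] (hG : IsPGroup p G)
    (hZ : ¬ Maximal (fun H : Subgroup G => IsMulCommutative H) (Subgroup.center G)) :
    Nat.card {A : Subgroup G // Maximal (fun H : Subgroup G => IsMulCommutative H) A} ≡
      Nat.card {T : Subgroup G // IsMulCommutative T ∧ Subgroup.center G < T ∧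
        (Subgroup.center G).relIndex T = p} [MOD p] :=
  hG.card_maximal_isMulCommutative_modEq_card_of_forall_ne_top hp hZ fun C _ =>
    (hG.to_subgroup C).card_maximal_isMulCommutative_modEq_one hp
end
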